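/- Let q be a prime power with q ≠ 2. Every automorphism of the graph NU(3,q^2) maps the set of the q^2 non-isotropic points of a tangent line of H(2,q^2) onto the set of the q^2 non-isotropic points of some tangent line of H(2,q^2). -/

import Mathlib

open Projectivization
open scoped LinearAlgebra.Projectivization

variable (F : Type) [Field F] [Fintype F]

/-- The projective space PG(n, |F|) over `F`, as the projectivization of `Fin (n+1) → F`. -/
abbrev PG (n : ℕ) := ℙ F (Fin (n+1) → F)

/-- The Hermitian variety `H(n,q^2)`: points `[x_0 : ... : x_n]` with
`x_0^{q+1} + ... + x_n^{q+1} = 0`. -/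
def Herm (q n : ℕ) : Set (PG F n) :=
  {p | ∑ i, (p.rep i) ^ (q+1) = 0}

/-- The set of points of `PG(n,q^2)` lying on the line given by a `2`-dimensional subspace. -/
def lineSet (n : ℕ) (W : Submodule F (Fin (n+1) → F)) : Set (PG F n) :=
  {p | p.submodule ≤ W}

/-- `W` determines a line of `PG(n,q^2)`, i.e. it is a `2`-dimensional subspace. -/
def IsLine (n : ℕ) (W : Submodule F (Fin (n+1) → F)) : Prop :=
  Module.finrank F W = 2

/-- A line is tangent to `H(n,q^2)` if it meets it in exactly one point. -/
def IsTangent (q n : ℕ) (W : Submodule F (Fin (n+1) → F)) : Prop :=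
  IsLine F n W ∧ (lineSet F n W ∩ Herm F q n).ncard = 1

/-- The graph `NU(n+1,q^2)`: vertices are points off the Hermitian variety, two distinct
vertices adjacent iff the line joining them is tangent to `H(n,q^2)`. -/
def NU (q n : ℕ) : SimpleGraph {p : PG F n // p ∉ Herm F q n} where
  Adj u v := u ≠ v ∧ IsTangent F q n (Submodule.span F {u.1.rep, v.1.rep})
  symm := ⟨by
    rintro u v ⟨h1, h2⟩
    exact ⟨h1.symm, by rwa [Set.pair_comm]⟩⟩
  loopless := ⟨fun u h => h.1 rfl⟩

/-- A strongly regular graph with parameters `(v, k, l, m)`. -/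
def IsSRG {V : Type} (G : SimpleGraph V) (v k l m : ℤ) : Prop :=
  (Nat.card V : ℤ) = v ∧
  (∀ x, (Nat.card (G.neighborSet x) : ℤ) = k) ∧
  (∀ x y, G.Adj x y → (Nat.card (G.commonNeighbors x y) : ℤ) = l) ∧
  (∀ x y, x ≠ y → ¬ G.Adj x y → (Nat.card (G.commonNeighbors x y) : ℤ) = m)

/-- The set of vertices of `NU(n+1,q^2)` (non-isotropic points) lying on the line `W`. -/
def lineVerts (q n : ℕ) (W : Submodule F (Fin (n+1) → F)) :
    Set {p : PG F n // p ∉ Herm F q n} :=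
  {u | u.1 ∈ lineSet F n W}

/-!
A tangent line is the polar `t^⊥` of its unique isotropic point `t`. Hence the tangent lines
through a vertex correspond to the isotropic points of a line, so there are at most `q + 1` of
them; and the neighbours on a tangent line `L` of a vertex `x ∉ L` form a Hermitian circle whose
centre is the point of `L` orthogonal to `x`. Two adjacent vertices off `L` have different centres
(a common one would be the pole of the line joining them, but it is not isotropic), so they have
at most two common neighbours on `L`.

Now let `S` be a clique of `q²` vertices, `q ≥ 3`. Counting the tangent lines through one point of
`S` gives a tangent line `L` with three points of `S`. A point of `S` off `L` has at most `q + 1`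
neighbours on `L`, so there would be two points of `S` off `L` with three common neighbours on `L`;
thus `S` lies on `L`. The image of the `q²` vertices of a tangent line under an automorphism is such
a clique.
-/

open Projectivization Module Polynomial Submodule

set_option linter.unusedSectionVars false

variable {F}

section FiniteField

variable {q : ℕ}

lemma one_lt_of_card_eq_sq (hF : Fintype.card F = q ^ 2) : 1 < q := by
  have h := Fintype.one_lt_card (α := F)
  rw [hF] at h
  by_contra! hq
  interval_cases q <;> simp at h

lemma add_pow_of_card_eq_sq (hF : Fintype.card F = q ^ 2) (x y : F) :
    (x + y) ^ q = x ^ q + y ^ q := by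
  obtain ⟨n, hp, hn⟩ := FiniteField.card F (ringChar F)
  have : Fact (ringChar F).Prime := ⟨hp⟩
  obtain ⟨k, -, rfl⟩ := (Nat.dvd_prime_pow hp).1 (hn ▸ hF ▸ dvd_pow_self q two_ne_zero)
  exact add_pow_char_pow x y _ k

lemma sub_pow_of_card_eq_sq (hF : Fintype.card F = q ^ 2) (x y : F) :
    (x - y) ^ q = x ^ q - y ^ q := by
  rw [eq_sub_iff_add_eq, ← add_pow_of_card_eq_sq hF, sub_add_cancel]

lemma neg_pow_of_card_eq_sq (hF : Fintype.card F = q ^ 2) (x : F) : (-x) ^ q = -x ^ q := by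
  rw [← zero_sub, sub_pow_of_card_eq_sq hF, zero_pow (one_lt_of_card_eq_sq hF).ne_bot, zero_sub]

lemma pow_pow_of_card_eq_sq (hF : Fintype.card F = q ^ 2) (x : F) : (x ^ q) ^ q = x := by
  rw [← pow_mul, ← sq, ← hF, FiniteField.pow_card]

lemma pow_injective_of_card_eq_sq (hF : Fintype.card F = q ^ 2) :
    Function.Injective fun x : F => x ^ q :=
  Function.LeftInverse.injective (pow_pow_of_card_eq_sq hF)

lemma exists_add_pow_ne_zero (hF : Fintype.card F = q ^ 2) : ∃ ε : F, ε + ε ^ q ≠ 0 := by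
  have hq := one_lt_of_card_eq_sq hF
  by_contra! h
  have hdeg : (X ^ q + X : F[X]).natDegree = q := by
    rw [natDegree_add_eq_left_of_natDegree_lt] <;> simp [hq]
  have h0 := eq_zero_of_natDegree_lt_card_of_eval_eq_zero' (X ^ q + X : F[X]) Finset.univ
    (fun x _ => by simpa [add_comm] using h x) (by rw [hdeg, Finset.card_univ, hF]; nlinarith)
  rw [h0, natDegree_zero] at hdeg
  omega

lemma exists_add_pow_eq (hF : Fintype.card F = q ^ 2) {c : F} (hc : c ^ q = c) :
    ∃ y : F, y + y ^ q = c := by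
  obtain ⟨ε, hε⟩ := exists_add_pow_ne_zero hF
  have hpow : (c / (ε + ε ^ q) * ε) ^ q = c / (ε + ε ^ q) * ε ^ q := by
    rw [mul_pow, div_pow, hc, add_pow_of_card_eq_sq hF, pow_pow_of_card_eq_sq hF, add_comm (ε ^ q)]
  refine ⟨c / (ε + ε ^ q) * ε, ?_⟩
  rw [hpow, ← mul_add, div_mul_cancel₀ _ hε]

/-- `(u + c) ^ q * (u + c) = r` is a circle of the `𝔽_q`-plane `F`. The equations of two circles
differ by their radical axis `(c - c') ^ q * u + (c - c') * u ^ q = const`, an `𝔽_q`-line, which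
meets a circle in at most two points. -/
lemma eq_of_three_mem_circles (hF : Fintype.card F = q ^ 2) {c c' r r' u₀ u₁ u₂ : F}
    (h₀₁ : u₀ ≠ u₁) (h₀₂ : u₀ ≠ u₂) (h₁₂ : u₁ ≠ u₂)
    (h : ∀ u ∈ ({u₀, u₁, u₂} : Set F),
      (u + c) ^ q * (u + c) = r ∧ (u + c') ^ q * (u + c') = r') :
    c = c' := by
  obtain ⟨h₀, h₀'⟩ := h u₀ (by simp)
  obtain ⟨h₁, h₁'⟩ := h u₁ (by simp)
  obtain ⟨h₂, h₂'⟩ := h u₂ (by simp)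
  simp only [add_pow_of_card_eq_sq hF] at h₀ h₀' h₁ h₁' h₂ h₂'
  have key : (c ^ q - c' ^ q) * ((u₁ - u₀) * (u₂ - u₀) * (u₂ - u₁)) = 0 := by
    linear_combination (u₁ - u₀) * ((c' - c) * (h₂ - h₀) + (u₂ + c) * (h₂ - h₂' - h₀ + h₀'))
      - (u₂ - u₀) * ((c' - c) * (h₁ - h₀) + (u₁ + c) * (h₁ - h₁' - h₀ + h₀'))
  have hcq : c ^ q = c' ^ q := by
    simpa [sub_eq_zero, h₀₁.symm, h₀₂.symm, h₁₂.symm] using key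
  exact pow_injective_of_card_eq_sq hF hcq

end FiniteField

section HermitianForm

variable {K : Type*} [Field K] {ι : Type*} [Fintype ι] {q : ℕ}

def hermForm (q : ℕ) (x y : ι → K) : K := ∑ i, x i * y i ^ q

def hermDual (q : ℕ) (v : ι → K) : Module.Dual K (ι → K) where
  toFun x := hermForm q x v
  map_add' x y := by simp only [hermForm, Pi.add_apply, add_mul, Finset.sum_add_distrib]
  map_smul' c x := by
    simp only [hermForm, Pi.smul_apply, smul_eq_mul, mul_assoc, Finset.mul_sum, RingHom.id_apply]

def polar (q : ℕ) (v : ι → K) : Submodule K (ι → K) := LinearMap.ker (hermDual q v)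

@[simp] lemma hermDual_apply (v x : ι → K) : hermDual q v x = hermForm q x v := rfl

lemma mem_polar {v x : ι → K} : x ∈ polar q v ↔ hermForm q x v = 0 := Iff.rfl

lemma hermForm_add_left (x y z : ι → K) :
    hermForm q (x + y) z = hermForm q x z + hermForm q y z :=
  map_add (hermDual q z) x y

lemma hermForm_smul_left (c : K) (x z : ι → K) : hermForm q (c • x) z = c * hermForm q x z :=
  map_smul (hermDual q z) c x

lemma hermForm_smul_right (c : K) (x z : ι → K) :
    hermForm q x (c • z) = c ^ q * hermForm q x z := by
  simp only [hermForm, Pi.smul_apply, smul_eq_mul, mul_pow, Finset.mul_sum]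
  exact Finset.sum_congr rfl fun i _ => by ring

lemma hermForm_smul_smul (c : K) (x : ι → K) :
    hermForm q (c • x) (c • x) = c * c ^ q * hermForm q x x := by
  rw [hermForm_smul_left, hermForm_smul_right, mul_assoc]

lemma hermForm_single [DecidableEq ι] (i : ι) (v : ι → K) :
    hermForm q (Pi.single i 1) v = v i ^ q := by
  simp [hermForm, Pi.single_apply]

lemma hermDual_ne_zero {v : ι → K} (hv : v ≠ 0) : hermDual q v ≠ 0 := by
  classical
  obtain ⟨i, hi⟩ := Function.ne_iff.1 hv
  intro h
  have := LinearMap.congr_fun h (Pi.single i 1)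
  rw [hermDual_apply, hermForm_single] at this
  exact pow_ne_zero q hi this

lemma finrank_polar {n : ℕ} {v : Fin (n + 1) → K} (hv : v ≠ 0) : finrank K (polar q v) = n := by
  have := Module.Dual.finrank_ker_add_one_of_ne_zero (hermDual_ne_zero (q := q) hv)
  rw [finrank_fin_fun] at this
  exact Nat.add_right_cancel this

end HermitianForm

section HermitianFormFinite

variable {ι : Type*} [Fintype ι] {q : ℕ}

lemma hermForm_add_right (hF : Fintype.card F = q ^ 2) (x y z : ι → F) :
    hermForm q x (y + z) = hermForm q x y + hermForm q x z := by
  simp only [hermForm, Pi.add_apply, add_pow_of_card_eq_sq hF, mul_add, Finset.sum_add_distrib]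

lemma hermForm_swap (hF : Fintype.card F = q ^ 2) (x y : ι → F) :
    hermForm q y x = hermForm q x y ^ q := by
  let frob : F →+* F :=
    { toFun := (· ^ q)
      map_one' := one_pow q
      map_mul' x y := mul_pow x y q
      map_zero' := zero_pow (one_lt_of_card_eq_sq hF).ne_bot
      map_add' := add_pow_of_card_eq_sq hF }
  change _ = frob _
  simp only [hermForm, map_sum, map_mul, frob, RingHom.coe_mk, MonoidHom.coe_mk, OneHom.coe_mk,
    pow_pow_of_card_eq_sq hF, mul_comm]

lemma hermForm_self_pow (hF : Fintype.card F = q ^ 2) (x : ι → F) :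
    hermForm q x x ^ q = hermForm q x x :=
  (hermForm_swap hF x x).symm

lemma hermForm_add_smul_self (hF : Fintype.card F = q ^ 2) (a b : ι → F) (s : F) :
    hermForm q (a + s • b) (a + s • b) = hermForm q a a + s * hermForm q b a +
      s ^ q * hermForm q a b + s * s ^ q * hermForm q b b := by
  rw [hermForm_add_left, hermForm_add_right hF, hermForm_add_right hF, hermForm_smul_smul,
    hermForm_smul_left, hermForm_smul_right]
  ring

lemma hermForm_add_smul_self_of_mem_polar (hF : Fintype.card F = q ^ 2) {b t : ι → F}
    (htt : hermForm q t t = 0) (hb : b ∈ polar q t) (s : F) :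
    hermForm q (b + s • t) (b + s • t) = hermForm q b b := by
  rw [hermForm_add_smul_self hF, hermForm_swap hF b t, mem_polar.1 hb, htt,
    zero_pow (one_lt_of_card_eq_sq hF).ne_bot]
  ring

lemma mem_span_singleton_of_polar_le (hF : Fintype.card F = q ^ 2) {a b : ι → F}
    (h : polar q a ≤ polar q b) : b ∈ F ∙ a := by
  classical
  have hmem := mem_span_of_iInf_ker_le_ker (L := fun _ : Unit => hermDual q a) (K := hermDual q b)
    (by simpa [polar] using h)
  obtain ⟨c, hc⟩ := Submodule.mem_span_singleton.1 (by simpa using hmem)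
  refine Submodule.mem_span_singleton.2 ⟨c ^ q, funext fun i => ?_⟩
  have := LinearMap.congr_fun hc (Pi.single i 1)
  simp only [LinearMap.smul_apply, hermDual_apply, hermForm_single, smul_eq_mul] at this
  rw [Pi.smul_apply, smul_eq_mul, ← pow_pow_of_card_eq_sq hF (b i), ← this, mul_pow,
    pow_pow_of_card_eq_sq hF]

end HermitianFormFinite

section ProjectiveLines

variable {K V : Type*} [Field K] [AddCommGroup V] [Module K V]

lemma add_smul_ne_zero {a b : V} (ha : a ∉ K ∙ b) (s : K) : a + s • b ≠ 0 := fun h =>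
  ha (Submodule.mem_span_singleton.2 ⟨-s, by rw [neg_smul, neg_eq_iff_add_eq_zero, add_comm, h]⟩)

lemma span_pair_rep_mk (x v : V) (hv : v ≠ 0) : span K {x, (mk K v hv).rep} = span K {x, v} := by
  rw [Submodule.span_insert, Submodule.span_insert, ← submodule_eq, submodule_mk]

lemma exists_eq_mk_add_smul {a b : V} (ha : a ∉ K ∙ b) (hb : b ≠ 0) {p : ℙ K V}
    (hp : p.rep ∈ span K {a, b}) (hpb : p ≠ mk K b hb) :
    ∃ s : K, p = mk K (a + s • b) (add_smul_ne_zero ha s) := by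
  obtain ⟨α, β, hαβ⟩ := Submodule.mem_span_pair.1 hp
  have hα : α ≠ 0 := by
    rintro rfl
    refine hpb ?_
    rw [← p.mk_rep, mk_eq_mk_iff']
    exact ⟨β, by rw [← hαβ, zero_smul, zero_add]⟩
  refine ⟨β / α, ?_⟩
  rw [← p.mk_rep, mk_eq_mk_iff']
  exact ⟨α, by rw [← hαβ, smul_add, smul_smul, mul_div_cancel₀ _ hα]⟩

lemma exists_mem_notMem_span_singleton {W : Submodule K V} (hW : finrank K W = 2) (a : V) :
    ∃ b ∈ W, b ∉ K ∙ a := by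
  by_contra! h
  have := Submodule.finrank_mono (show W ≤ K ∙ a from h)
  have := finrank_span_le_card (R := K) ({a} : Set V)
  simp only [Set.toFinset_singleton, Finset.card_singleton] at this
  omega

variable [FiniteDimensional K V]

lemma span_pair_eq {W : Submodule K V} (hW : finrank K W = 2) {a b : V} (ha : a ∈ W) (hb : b ∈ W)
    (hb0 : b ≠ 0) (hab : a ∉ K ∙ b) : span K {a, b} = W := by
  have hind : LinearIndependent K ![b, a] := (LinearIndependent.pair_iff' hb0).2 fun c h =>
    hab (mem_span_singleton.2 ⟨c, h⟩)
  refine eq_of_le_of_finrank_eq (span_le.2 ?_) ?_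
  · rintro x (rfl | rfl) <;> assumption
  · rw [hW, Set.pair_comm, ← Matrix.range_cons_cons_empty, finrank_span_eq_card hind,
      Fintype.card_fin]

lemma span_rep_pair_eq {W : Submodule K V} (hW : finrank K W = 2) {u v : ℙ K V} (huv : u ≠ v)
    (hu : u.rep ∈ W) (hv : v.rep ∈ W) : span K {u.rep, v.rep} = W := by
  refine span_pair_eq hW hu hv v.rep_nonzero fun h => huv ?_
  obtain ⟨c, hc⟩ := mem_span_singleton.1 h
  rw [← u.mk_rep, ← v.mk_rep, mk_eq_mk_iff']
  exact ⟨c, hc⟩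

end ProjectiveLines

section Tangents

variable {n q : ℕ}

lemma mem_lineSet_iff {W : Submodule F (Fin (n + 1) → F)} {p : PG F n} :
    p ∈ lineSet F n W ↔ p.rep ∈ W := by
  change p.submodule ≤ W ↔ _
  rw [submodule_eq, span_singleton_le_iff_mem]

lemma mk_mem_lineSet_iff {W : Submodule F (Fin (n + 1) → F)} {v : Fin (n + 1) → F} (hv : v ≠ 0) :
    mk F v hv ∈ lineSet F n W ↔ v ∈ W := by
  change (mk F v hv).submodule ≤ W ↔ _
  rw [submodule_mk, span_singleton_le_iff_mem]

lemma mem_Herm_iff {p : PG F n} : p ∈ Herm F q n ↔ hermForm q p.rep p.rep = 0 := by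
  change ∑ i, p.rep i ^ (q + 1) = 0 ↔ _
  simp only [hermForm, pow_succ']

lemma mk_mem_Herm_iff {v : Fin (n + 1) → F} (hv : v ≠ 0) :
    mk F v hv ∈ Herm F q n ↔ hermForm q v v = 0 := by
  obtain ⟨a, ha⟩ := exists_smul_eq_mk_rep F v hv
  rw [mem_Herm_iff, ← ha, Units.smul_def, hermForm_smul_smul]
  simp [a.ne_zero]

lemma ncard_lineSet {W : Submodule F (Fin (n + 1) → F)} (hW : finrank F W = 2) :
    (lineSet F n W).ncard = Fintype.card F + 1 := by
  have hrange : lineSet F n W = Set.range (Projectivization.map W.subtype W.injective_subtype) := by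
    ext p
    refine ⟨fun hp => ⟨mk F ⟨p.rep, mem_lineSet_iff.1 hp⟩ (by simp [p.rep_nonzero]), ?_⟩, ?_⟩
    · rw [map_mk]
      exact p.mk_rep
    · rintro ⟨p, rfl⟩
      induction p using Projectivization.ind with
      | h v hv => simp [map_mk, mk_mem_lineSet_iff]
  rw [hrange, ← Set.image_univ, Set.ncard_image_of_injective _ (Projectivization.map_injective _ _),
    Set.ncard_univ, card_of_finrank_two F W hW, Nat.card_eq_fintype_card]

lemma ncard_lineVerts {W : Submodule F (Fin (n + 1) → F)} (hW : IsTangent F q n W) :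
    (lineVerts F q n W).ncard = Fintype.card F := by
  have himage :
      Subtype.val '' lineVerts F q n W = lineSet F n W \ (lineSet F n W ∩ Herm F q n) := by
    ext p
    simp [lineVerts]
  rw [← Set.ncard_image_of_injective _ Subtype.val_injective, himage,
    Set.ncard_sdiff Set.inter_subset_left, hW.2, ncard_lineSet hW.1, Nat.add_sub_cancel]

lemma IsTangent.exists_mem {W : Submodule F (Fin (n + 1) → F)} (hW : IsTangent F q n W) :
    ∃ P, P ∈ lineSet F n W ∩ Herm F q n :=
  Set.nonempty_of_ncard_ne_zero (by rw [hW.2]; exact one_ne_zero)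

lemma IsTangent.eq_of_mem {W : Submodule F (Fin (n + 1) → F)} (hW : IsTangent F q n W)
    {P P' : PG F n} (hP : P ∈ lineSet F n W ∩ Herm F q n) (hP' : P' ∈ lineSet F n W ∩ Herm F q n) :
    P = P' := by
  obtain ⟨P₀, hP₀⟩ := Set.ncard_eq_one.1 hW.2
  rw [hP₀] at hP hP'
  exact hP.trans hP'.symm

lemma IsTangent.exists_eq_mk_add_smul {W : Submodule F (Fin (n + 1) → F)} (hW : IsTangent F q n W)
    {P : PG F n} (hP : P ∈ lineSet F n W ∩ Herm F q n) {b : Fin (n + 1) → F} (hbW : b ∈ W)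
    (hbP : b ∉ F ∙ P.rep) {p : {p : PG F n // p ∉ Herm F q n}} (hp : p ∈ lineVerts F q n W) :
    ∃ s : F, p.1 = mk F (b + s • P.rep) (add_smul_ne_zero hbP s) := by
  refine _root_.exists_eq_mk_add_smul hbP P.rep_nonzero ?_ fun h =>
    p.2 (by rw [h, P.mk_rep]; exact hP.2)
  rw [span_pair_eq hW.1 hbW (mem_lineSet_iff.1 hP.1) P.rep_nonzero hbP]
  exact mem_lineSet_iff.1 hp

lemma IsTangent.le_polar (hF : Fintype.card F = q ^ 2) {W : Submodule F (Fin (n + 1) → F)}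
    (hW : IsTangent F q n W) {P : PG F n} (hP : P ∈ lineSet F n W ∩ Herm F q n) :
    W ≤ polar q P.rep := by
  set t := P.rep
  have htt : hermForm q t t = 0 := mem_Herm_iff.1 hP.2
  intro b hbW
  rw [mem_polar]
  by_contra hbt
  -- otherwise some point `[b + s • t] ≠ P` of `W` is isotropic as well
  obtain ⟨y, hy⟩ := exists_add_pow_eq hF (c := -hermForm q b b)
    (by rw [neg_pow_of_card_eq_sq hF, hermForm_self_pow hF])
  obtain ⟨s, hs⟩ : ∃ s : F, s ^ q * hermForm q b t = y :=
    ⟨(y / hermForm q b t) ^ q, by rw [pow_pow_of_card_eq_sq hF, div_mul_cancel₀ _ hbt]⟩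
  have hsy : s * hermForm q b t ^ q = y ^ q := by rw [← hs, mul_pow, pow_pow_of_card_eq_sq hF]
  have hbs : b + s • t ≠ 0 := fun h => hbt (by
    rw [eq_neg_of_add_eq_zero_left h, ← neg_smul, hermForm_smul_left, htt, mul_zero])
  have hiso : hermForm q (b + s • t) (b + s • t) = 0 := by
    rw [hermForm_add_smul_self hF, htt, hermForm_swap hF b t, hsy, hs]
    linear_combination hy
  have hmem : mk F (b + s • t) hbs ∈ lineSet F n W ∩ Herm F q n :=
    ⟨(mk_mem_lineSet_iff hbs).2 (W.add_mem hbW (W.smul_mem s (mem_lineSet_iff.1 hP.1))),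
      (mk_mem_Herm_iff hbs).2 hiso⟩
  have hPeq := hW.eq_of_mem hmem hP
  rw [← P.mk_rep, mk_eq_mk_iff'] at hPeq
  obtain ⟨c, hc⟩ := hPeq
  refine hbt ?_
  rw [show b = (c - s) • t by rw [sub_smul, hc, add_sub_cancel_right], hermForm_smul_left, htt,
    mul_zero]

lemma IsTangent.hermForm_mul_hermForm (hF : Fintype.card F = q ^ 2) {a b : Fin (n + 1) → F}
    (h : IsTangent F q n (span F {a, b})) :
    hermForm q a a * hermForm q b b = hermForm q a b * hermForm q b a := by
  obtain ⟨P, hP⟩ := h.exists_mem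
  have horth : ∀ x ∈ span F {a, b}, hermForm q P.rep x = 0 := fun x hx => by
    rw [hermForm_swap hF, mem_polar.1 (h.le_polar hF hP hx),
      zero_pow (one_lt_of_card_eq_sq hF).ne_bot]
  obtain ⟨α, β, hαβ⟩ := mem_span_pair.1 (mem_lineSet_iff.1 hP.1)
  have ha := horth a (subset_span (by simp))
  have hb := horth b (subset_span (by simp))
  rw [← hαβ, hermForm_add_left, hermForm_smul_left, hermForm_smul_left] at ha hb
  by_cases hα : α = 0
  · have hβ : β ≠ 0 := by
      rintro rfl
      exact P.rep_nonzero (by rw [← hαβ, hα, zero_smul, zero_smul, add_zero])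
    refine mul_left_cancel₀ hβ ?_
    linear_combination hermForm q a a * hb - hermForm q a b * ha
  · refine mul_left_cancel₀ hα ?_
    linear_combination hermForm q b b * ha - hermForm q b a * hb

end Tangents

section Plane

variable {q : ℕ}

lemma IsTangent.eq_polar (hF : Fintype.card F = q ^ 2) {W : Submodule F (Fin 3 → F)}
    (hW : IsTangent F q 2 W) {P : PG F 2} (hP : P ∈ lineSet F 2 W ∩ Herm F q 2) :
    W = polar q P.rep :=
  eq_of_le_of_finrank_eq (hW.le_polar hF hP) (by rw [hW.1, finrank_polar P.rep_nonzero])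

/-- A vector orthogonal to a tangent line is a multiple of its pole. -/
lemma hermForm_self_eq_zero_of_isTangent (hF : Fintype.card F = q ^ 2) {x y z : Fin 3 → F}
    (h : IsTangent F q 2 (span F {x, y})) (hx : hermForm q x z = 0) (hy : hermForm q y z = 0) :
    hermForm q z z = 0 := by
  obtain ⟨P, hP⟩ := h.exists_mem
  have hle : polar q P.rep ≤ polar q z := by
    rw [← h.eq_polar hF hP, span_le]
    rintro w (rfl | rfl) <;> assumption
  obtain ⟨c, rfl⟩ := mem_span_singleton.1 (mem_span_singleton_of_polar_le hF hle)
  rw [hermForm_smul_smul, mem_Herm_iff.1 hP.2, mul_zero]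

lemma exists_hermForm_self_ne_zero (hF : Fintype.card F = q ^ 2) {V : Submodule F (Fin 3 → F)}
    (hV : finrank F V = 2) : ∃ v ∈ V, hermForm q v v ≠ 0 := by
  by_contra! hiso
  -- by polarization, a totally isotropic line `V` equals `a^⊥` for every nonzero `a ∈ V`
  have hpolar : ∀ a ∈ V, a ≠ 0 → V = polar q a := fun a ha ha0 => by
    refine eq_of_le_of_finrank_eq (fun v hv => mem_polar.2 ?_) (by rw [hV, finrank_polar ha0])
    by_contra hva
    obtain ⟨ε, hε⟩ := exists_add_pow_ne_zero hF
    obtain ⟨s, hs⟩ : ∃ s : F, s * hermForm q v a = ε := ⟨ε / hermForm q v a, div_mul_cancel₀ _ hva⟩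
    refine hε ?_
    have := hiso (a + s • v) (V.add_mem ha (V.smul_mem s hv))
    rw [hermForm_add_smul_self hF, hiso a ha, hiso v hv, hermForm_swap hF v a, ← mul_pow,
      hs] at this
    linear_combination this
  obtain ⟨a, haV, ha0⟩ := exists_mem_ne_zero_of_ne_bot (p := V) fun h => by
    rw [h, finrank_bot] at hV
    omega
  obtain ⟨b, hbV, hb⟩ := exists_mem_notMem_span_singleton hV a
  have hb0 : b ≠ 0 := by rintro rfl; exact hb (zero_mem _)
  exact hb (mem_span_singleton_of_polar_le hF ((hpolar a haV ha0).symm.le.trans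
    (hpolar b hbV hb0).le))

lemma ncard_lineSet_inter_Herm_le (hF : Fintype.card F = q ^ 2) {V : Submodule F (Fin 3 → F)}
    (hV : finrank F V = 2) : (lineSet F 2 V ∩ Herm F q 2).ncard ≤ q + 1 := by
  obtain ⟨b, hbV, hb⟩ := exists_hermForm_self_ne_zero hF hV
  have hb0 : b ≠ 0 := by rintro rfl; simp [hermForm] at hb
  obtain ⟨a, haV, ha⟩ := exists_mem_notMem_span_singleton hV b
  have hspan := span_pair_eq hV haV hbV hb0 ha
  -- the isotropic points `[a + s • b]` are cut out by a polynomial of degree `q + 1` in `s`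
  set P : F[X] := C (hermForm q b b) * X ^ (q + 1) + C (hermForm q a b) * X ^ q +
    C (hermForm q b a) * X + C (hermForm q a a) with hP
  have heval : ∀ s, P.eval s = hermForm q (a + s • b) (a + s • b) := fun s => by
    simp only [hP, eval_add, eval_mul, eval_C, eval_pow, eval_X, hermForm_add_smul_self hF]
    ring
  have hdeg : P.natDegree = q + 1 := by
    have := one_lt_of_card_eq_sq hF
    rw [hP]
    compute_degree!
    simpa [show q ≠ 0 by omega] using hb
  have hP0 : P ≠ 0 := ne_zero_of_natDegree_gt (n := 0) (by omega)
  have hsub : lineSet F 2 V ∩ Herm F q 2 ⊆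
      (fun s => mk F (a + s • b) (add_smul_ne_zero ha s)) '' P.rootSet F := by
    rintro p ⟨hpV, hpH⟩
    have hpb : p ≠ mk F b hb0 := by
      rintro rfl
      exact hb ((mk_mem_Herm_iff hb0).1 hpH)
    obtain ⟨s, rfl⟩ := exists_eq_mk_add_smul ha hb0 (hspan ▸ mem_lineSet_iff.1 hpV) hpb
    refine ⟨s, mem_rootSet.2 ⟨hP0, ?_⟩, rfl⟩
    rw [coe_aeval_eq_eval, heval]
    exact (mk_mem_Herm_iff _).1 hpH
  calc _ ≤ _ := Set.ncard_le_ncard hsub (Set.toFinite _)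
    _ ≤ (P.rootSet F).ncard := Set.ncard_image_le (Set.toFinite _)
    _ ≤ P.natDegree := ncard_rootSet_le P F
    _ = q + 1 := hdeg

lemma ncard_isTangent_mem_le (hF : Fintype.card F = q ^ 2) {w : Fin 3 → F} (hw : w ≠ 0) :
    {W : Submodule F (Fin 3 → F) | IsTangent F q 2 W ∧ w ∈ W}.ncard ≤ q + 1 := by
  have hpole : ∀ W ∈ {W : Submodule F (Fin 3 → F) | IsTangent F q 2 W ∧ w ∈ W},
      ∃ P, P ∈ lineSet F 2 W ∩ Herm F q 2 := fun W hW => hW.1.exists_mem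
  choose! pole hpole using hpole
  calc _ ≤ (lineSet F 2 (polar q w) ∩ Herm F q 2).ncard := by
        refine Set.ncard_le_ncard_of_injOn pole (fun W hW => ⟨mem_lineSet_iff.2 (mem_polar.2 ?_),
          (hpole W hW).2⟩) (fun W hW W' hW' h => ?_)
        · rw [hermForm_swap hF, mem_polar.1 (hW.1.le_polar hF (hpole W hW) hW.2),
            zero_pow (one_lt_of_card_eq_sq hF).ne_bot]
        · rw [hW.1.eq_polar hF (hpole W hW), hW'.1.eq_polar hF (hpole W' hW'), h]
    _ ≤ q + 1 := ncard_lineSet_inter_Herm_le hF (finrank_polar hw)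

end Plane

section Graph

variable {q : ℕ}

lemma adj_of_mem_lineVerts {n : ℕ} {W : Submodule F (Fin (n + 1) → F)} (hW : IsTangent F q n W)
    {u v : {p : PG F n // p ∉ Herm F q n}} (hu : u ∈ lineVerts F q n W) (hv : v ∈ lineVerts F q n W)
    (huv : u ≠ v) : (NU F q n).Adj u v :=
  ⟨huv, by rwa [span_rep_pair_eq hW.1 (Subtype.coe_ne_coe.2 huv) (mem_lineSet_iff.1 hu)
    (mem_lineSet_iff.1 hv)]⟩

lemma ncard_le_of_injOn_span (hF : Fintype.card F = q ^ 2) (x : {p : PG F 2 // p ∉ Herm F q 2})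
    {T : Set {p : PG F 2 // p ∉ Herm F q 2}} (hT : ∀ u ∈ T, (NU F q 2).Adj x u)
    (hinj : Set.InjOn (fun u => span F {x.1.rep, u.1.rep}) T) : T.ncard ≤ q + 1 :=
  calc T.ncard ≤ {W : Submodule F (Fin 3 → F) | IsTangent F q 2 W ∧ x.1.rep ∈ W}.ncard :=
        Set.ncard_le_ncard_of_injOn _ (fun u hu => ⟨(hT u hu).2, subset_span (by simp)⟩) hinj
    _ ≤ q + 1 := ncard_isTangent_mem_le hF x.1.rep_nonzero

/-- The neighbours `[b + s • t]` of `z` on the tangent line `t^⊥` lie on a circle in `s ^ q`, whose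
centre corresponds to the point of `t^⊥` orthogonal to `z`. -/
lemma exists_circle (hF : Fintype.card F = q ^ 2) {t b z : Fin 3 → F} (htt : hermForm q t t = 0)
    (hb : b ∈ polar q t) (hz : hermForm q z t ≠ 0) :
    ∃ c r : F, hermForm q z (b + (-c) ^ q • t) = 0 ∧
      ∀ s : F, IsTangent F q 2 (span F {z, b + s • t}) → (s ^ q + c) ^ q * (s ^ q + c) = r := by
  refine ⟨hermForm q z b / hermForm q z t,
    hermForm q z z * hermForm q b b / (hermForm q z t ^ q * hermForm q z t), ?_, fun s h => ?_⟩
  · rw [hermForm_add_right hF, hermForm_smul_right, pow_pow_of_card_eq_sq hF]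
    field_simp
    ring
  have hgram := h.hermForm_mul_hermForm hF
  rw [hermForm_add_smul_self_of_mem_polar hF htt hb, hermForm_swap hF z (b + s • t),
    hermForm_add_right hF, hermForm_smul_right] at hgram
  have hc : s ^ q + hermForm q z b / hermForm q z t =
      (hermForm q z b + s ^ q * hermForm q z t) / hermForm q z t := by
    field_simp
    ring
  rw [hc, div_pow, hgram]
  field_simp

lemma ncard_lineVerts_inter_commonNeighbors_le (hF : Fintype.card F = q ^ 2)
    {L : Submodule F (Fin 3 → F)} (hL : IsTangent F q 2 L) {x y : {p : PG F 2 // p ∉ Herm F q 2}}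
    (hx : x ∉ lineVerts F q 2 L) (hy : y ∉ lineVerts F q 2 L) (hxy : (NU F q 2).Adj x y) :
    (lineVerts F q 2 L ∩ (NU F q 2).commonNeighbors x y).ncard ≤ 2 := by
  obtain ⟨P, hP⟩ := hL.exists_mem
  set t := P.rep
  have hLt := hL.eq_polar hF hP
  have htt : hermForm q t t = 0 := mem_Herm_iff.1 hP.2
  obtain ⟨b, hbL, hbt⟩ := exists_mem_notMem_span_singleton hL.1 t
  have hb : b ∈ polar q t := hLt ▸ hbL
  have hoff : ∀ z ∉ lineVerts F q 2 L, hermForm q z.1.rep t ≠ 0 := fun z hz h =>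
    hz (mem_lineSet_iff.2 (hLt ▸ mem_polar.2 h))
  obtain ⟨cx, rx, hxc, hx'⟩ := exists_circle hF htt hb (hoff x hx)
  obtain ⟨cy, ry, hyc, hy'⟩ := exists_circle hF htt hb (hoff y hy)
  have hparam : ∀ p ∈ lineVerts F q 2 L ∩ (NU F q 2).commonNeighbors x y, ∃ s : F,
      p.1 = mk F (b + s • t) (add_smul_ne_zero hbt s) ∧
        (s ^ q + cx) ^ q * (s ^ q + cx) = rx ∧ (s ^ q + cy) ^ q * (s ^ q + cy) = ry := by
    rintro p ⟨hpL, hpx, hpy⟩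
    obtain ⟨s, hs⟩ := hL.exists_eq_mk_add_smul hP hbL hbt hpL
    have htan : ∀ z, (NU F q 2).Adj z p → IsTangent F q 2 (span F {z.1.rep, b + s • t}) :=
      fun z hz => by rw [← span_pair_rep_mk _ _ (add_smul_ne_zero hbt s), ← hs]; exact hz.2
    exact ⟨s, hs, hx' s (htan x hpx), hy' s (htan y hpy)⟩
  by_contra! h3
  obtain ⟨p₀, p₁, p₂, hp₀, hp₁, hp₂, h₀₁, h₀₂, h₁₂⟩ := (Set.two_lt_ncard_iff (Set.toFinite _)).1 h3
  obtain ⟨s₀, hs₀, hx₀, hy₀⟩ := hparam p₀ hp₀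
  obtain ⟨s₁, hs₁, hx₁, hy₁⟩ := hparam p₁ hp₁
  obtain ⟨s₂, hs₂, hx₂, hy₂⟩ := hparam p₂ hp₂
  have hne : ∀ {p p' : {p : PG F 2 // p ∉ Herm F q 2}} {s s' : F}, p ≠ p' →
      p.1 = mk F (b + s • t) (add_smul_ne_zero hbt s) →
      p'.1 = mk F (b + s' • t) (add_smul_ne_zero hbt s') → s ^ q ≠ s' ^ q :=
    fun hpp' hs hs' h => hpp' (Subtype.ext (by rw [hs, hs', pow_injective_of_card_eq_sq hF h]))
  have hc : cx = cy := eq_of_three_mem_circles hF (hne h₀₁ hs₀ hs₁) (hne h₀₂ hs₀ hs₂)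
    (hne h₁₂ hs₁ hs₂) (by rintro u (rfl | rfl | rfl) <;> tauto)
  -- the common centre is orthogonal to `x` and `y`, hence isotropic, unlike the vertices on `L`
  have hiso := hermForm_self_eq_zero_of_isTangent hF hxy.2 hxc (hc ▸ hyc)
  rw [hermForm_add_smul_self_of_mem_polar hF htt hb] at hiso
  exact p₀.2 (by rw [hs₀, mk_mem_Herm_iff, hermForm_add_smul_self_of_mem_polar hF htt hb, hiso])

end Graph

section Clique

variable {q : ℕ}

lemma ncard_lineVerts_inter_neighborSet_le (hF : Fintype.card F = q ^ 2)
    {L : Submodule F (Fin 3 → F)} (hL : IsTangent F q 2 L) {x : {p : PG F 2 // p ∉ Herm F q 2}}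
    (hx : x ∉ lineVerts F q 2 L) :
    (lineVerts F q 2 L ∩ (NU F q 2).neighborSet x).ncard ≤ q + 1 := by
  refine ncard_le_of_injOn_span hF x (fun p hp => hp.2) fun p hp p' hp'L h => ?_
  by_contra hpp'
  -- otherwise the line `xp` would contain `p'` and hence be `L`
  have hxp : IsTangent F q 2 (span F {x.1.rep, p.1.rep}) := hp.2.2
  have hp' : p'.1.rep ∈ span F {x.1.rep, p.1.rep} := by
    simp only at h
    rw [h]
    exact subset_span (by simp)
  refine hx (mem_lineSet_iff.2 ?_)
  rw [← span_rep_pair_eq hL.1 (Subtype.coe_ne_coe.2 hpp') (mem_lineSet_iff.1 hp.1)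
      (mem_lineSet_iff.1 hp'L.1),
    span_rep_pair_eq hxp.1 (Subtype.coe_ne_coe.2 hpp') (subset_span (by simp)) hp']
  exact subset_span (by simp)

lemma exists_isTangent_two_lt_ncard_inter_lineVerts (hF : Fintype.card F = q ^ 2) (hq : 3 ≤ q)
    {S : Set {p : PG F 2 // p ∉ Herm F q 2}} (hS : (NU F q 2).IsClique S)
    (hcard : S.ncard = q ^ 2) :
    ∃ L, IsTangent F q 2 L ∧ 2 < (S ∩ lineVerts F q 2 L).ncard := by
  obtain ⟨w, hw⟩ : S.Nonempty := Set.nonempty_of_ncard_ne_zero (by rw [hcard]; positivity)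
  -- the `q ^ 2 - 1` other points of `S` lie on at most `q + 1` tangent lines through `w`
  obtain ⟨u, hu, u', hu', huu', hspan⟩ : ∃ u ∈ S \ {w}, ∃ u' ∈ S \ {w}, u ≠ u' ∧
      span F {w.1.rep, u.1.rep} = span F {w.1.rep, u'.1.rep} := by
    by_contra! h
    have := ncard_le_of_injOn_span hF w (T := S \ {w}) (fun u hu => hS hw hu.1 (Ne.symm hu.2))
      fun u hu u' hu' heq => by_contra fun hne => h u hu u' hu' hne heq
    rw [Set.ncard_sdiff_singleton_of_mem hw, hcard] at this
    have : q ^ 2 ≤ q + 2 := by omega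
    nlinarith
  refine ⟨_, (hS hw hu.1 (Ne.symm hu.2)).2, (Set.two_lt_ncard_iff (Set.toFinite _)).2
    ⟨w, u, u', ⟨hw, mem_lineSet_iff.2 (subset_span (by simp))⟩,
      ⟨hu.1, mem_lineSet_iff.2 (subset_span (by simp))⟩,
      ⟨hu'.1, mem_lineSet_iff.2 (hspan ▸ subset_span (by simp))⟩,
      fun h => hu.2 h.symm, fun h => hu'.2 h.symm, huu'⟩⟩

theorem exists_isTangent_of_isClique (hF : Fintype.card F = q ^ 2) (hq : 3 ≤ q)
    {S : Set {p : PG F 2 // p ∉ Herm F q 2}} (hS : (NU F q 2).IsClique S)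
    (hcard : S.ncard = q ^ 2) :
    ∃ L, IsTangent F q 2 L ∧ S ⊆ lineVerts F q 2 L := by
  obtain ⟨L, hL, h3⟩ := exists_isTangent_two_lt_ncard_inter_lineVerts hF hq hS hcard
  refine ⟨L, hL, fun x hxS => ?_⟩
  by_contra hxL
  have hnbr : ∀ z ∈ S, z ∉ lineVerts F q 2 L → S ∩ lineVerts F q 2 L ⊆ (NU F q 2).neighborSet z :=
    fun z hzS hzL p hp => hS hzS hp.1 fun h => hzL (h ▸ hp.2)
  have hon : (S ∩ lineVerts F q 2 L).ncard ≤ q + 1 :=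
    (Set.ncard_le_ncard fun p hp => Set.mem_inter hp.2 (hnbr x hxS hxL hp)).trans
      (ncard_lineVerts_inter_neighborSet_le hF hL hxL)
  obtain ⟨y, ⟨hyS, hyL⟩, hyx⟩ : ∃ y ∈ S \ lineVerts F q 2 L, y ≠ x := by
    refine Set.exists_ne_of_one_lt_ncard ?_ x
    have := Set.ncard_inter_add_ncard_sdiff_eq_ncard S (lineVerts F q 2 L)
    have : q + 3 ≤ q ^ 2 := by nlinarith
    omega
  have := (Set.ncard_le_ncard fun p hp => Set.mem_inter hp.2
    ((NU F q 2).mem_commonNeighbors.2 ⟨hnbr x hxS hxL hp, hnbr y hyS hyL hp⟩)).trans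
    (ncard_lineVerts_inter_commonNeighbors_le hF hL hxL hyL (hS hxS hyS hyx.symm))
  omega

end Clique

theorem aut_maps_tangent_to_tangent_general (q : ℕ) (hq2 : q ≠ 2)
    (hF : Fintype.card F = q ^ 2)
    (g : NU F q 2 ≃g NU F q 2)
    (W : Submodule F (Fin 3 → F)) (hW : IsTangent F q 2 W) :
    ∃ W' : Submodule F (Fin 3 → F), IsTangent F q 2 W' ∧
      ⇑g '' lineVerts F q 2 W = lineVerts F q 2 W' := by
  have hq : 3 ≤ q := by
    have := one_lt_of_card_eq_sq hF
    omega
  have hclique : (NU F q 2).IsClique (g '' lineVerts F q 2 W) := by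
    rintro _ ⟨u, hu, rfl⟩ _ ⟨v, hv, rfl⟩ huv
    exact g.map_adj_iff.2 (adj_of_mem_lineVerts hW hu hv fun h => huv (h ▸ rfl))
  have hcard : (g '' lineVerts F q 2 W).ncard = q ^ 2 := by
    rw [Set.ncard_image_of_injective _ g.injective, ncard_lineVerts hW, hF]
  obtain ⟨W', hW', hsub⟩ := exists_isTangent_of_isClique hF hq hclique hcard
  exact ⟨W', hW', Set.eq_of_subset_of_ncard_le hsub (by rw [ncard_lineVerts hW', hcard, hF])
    (Set.toFinite _)⟩

/-- For `q ≠ 2`, every automorphism of `NU(3,q^2)` maps the set of the `q^2`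
non-isotropic points of a tangent line onto the set of non-isotropic points of some
tangent line. -/
theorem aut_maps_tangent_to_tangent (q : ℕ) (hq : IsPrimePow q) (hq2 : q ≠ 2)
    (hF : Fintype.card F = q ^ 2)
    (g : NU F q 2 ≃g NU F q 2)
    (W : Submodule F (Fin 3 → F)) (hW : IsTangent F q 2 W) :
    ∃ W' : Submodule F (Fin 3 → F), IsTangent F q 2 W' ∧
      ⇑g '' lineVerts F q 2 W = lineVerts F q 2 W' :=
  aut_maps_tangent_to_tangent_general q hq2 hF g W hW
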